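/- Let ℓ be an odd prime, and let G be the group generated by δ, γ, ε with δ² = γ^(ℓ−1) = ε^ℓ = 1, δ central, and γεγ⁻¹ = ε^(w⁻¹) for w a generator of (ℤ/ℓℤ)ˣ. Let A = 𝔽_ℓ² be the G-module where ε acts by [[1,1],[0,1]], γ acts by [[1,0],[0,w]], and δ acts by −1. Then H¹(G, A) = 0. -/
import Mathlib


open Matrix

/-- Let `ℓ` be an odd prime and `G` the group generated by `δ, γ, ε` with
`δ² = γ^(ℓ−1) = ε^ℓ = 1`, `δ` central, and `γεγ⁻¹ = ε^(w⁻¹)` for `w` a generator of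
`(ℤ/ℓℤ)ˣ`. Let `A = 𝔽_ℓ²` be the `G`-module where (via `ρ : G →* GL₂(𝔽_ℓ)`) `ε` acts by
`[[1,1],[0,1]]`, `γ` acts by `[[1,0],[0,w]]` and `δ` acts by `−1`. Then `H¹(G, A) = 0`:
every `1`-cocycle is a `1`-coboundary. -/
theorem stmt14 (ℓ : ℕ) [Fact ℓ.Prime] (hodd : Odd ℓ)
    (G : Type*) [Group G] (δ γ ε : G)
    (hgen : Subgroup.closure ({δ, γ, ε} : Set G) = ⊤)
    (hδ : δ * δ = 1) (hγ : γ ^ (ℓ - 1) = 1) (hε : ε ^ ℓ = 1)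
    (hδc : ∀ g : G, δ * g = g * δ)
    (w : (ZMod ℓ)ˣ) (hw : orderOf w = ℓ - 1)
    (k : ℕ) (hk : (k : ZMod ℓ) = ((w⁻¹ : (ZMod ℓ)ˣ) : ZMod ℓ))
    (hγε : γ * ε * γ⁻¹ = ε ^ k)
    (ρ : G →* GL (Fin 2) (ZMod ℓ))
    (hρε : (ρ ε : Matrix (Fin 2) (Fin 2) (ZMod ℓ)) = !![1, 1; 0, 1])
    (hργ : (ρ γ : Matrix (Fin 2) (Fin 2) (ZMod ℓ)) = !![1, 0; 0, (w : ZMod ℓ)])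
    (hρδ : (ρ δ : Matrix (Fin 2) (Fin 2) (ZMod ℓ)) = -1)
    (f : G → Fin 2 → ZMod ℓ)
    (hf : ∀ g h : G, f (g * h) =
      f g + (ρ g : Matrix (Fin 2) (Fin 2) (ZMod ℓ)).mulVec (f h)) :
    ∃ a : Fin 2 → ZMod ℓ, ∀ g : G,
      f g = (ρ g : Matrix (Fin 2) (Fin 2) (ZMod ℓ)).mulVec a - a := by
  have hℓ2 : ℓ ≠ 2 := by
    rintro rfl
    exact Nat.not_odd_iff_even.mpr (by norm_num) hodd
  have h2 : (2 : ZMod ℓ) ≠ 0 := by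
    intro h
    have : (ℓ : ℕ) ∣ 2 := by
      have := (ZMod.natCast_eq_zero_iff 2 ℓ).mp (by exact_mod_cast h)
      exact this
    exact hℓ2 (((Nat.prime_dvd_prime_iff_eq (Fact.out) Nat.prime_two).mp this))
  have h21 : (2 : ZMod ℓ)⁻¹ * 2 = 1 := inv_mul_cancel₀ h2
  refine ⟨(-(2 : ZMod ℓ)⁻¹) • f δ, fun g => ?_⟩
  have h1 := hf δ g
  have h2' := hf g δ
  rw [hδc g] at h1
  rw [h2', hρδ] at h1
  have hneg : (-1 : Matrix (Fin 2) (Fin 2) (ZMod ℓ)).mulVec (f g) = -(f g) := by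
    simp [Matrix.neg_mulVec]
  rw [hneg] at h1
  funext i
  have ki := congrFun h1 i
  simp only [Pi.add_apply, Pi.neg_apply] at ki
  have hmv : (ρ g : Matrix (Fin 2) (Fin 2) (ZMod ℓ)).mulVec ((-(2 : ZMod ℓ)⁻¹) • f δ)
      = (-(2 : ZMod ℓ)⁻¹) • (ρ g : Matrix (Fin 2) (Fin 2) (ZMod ℓ)).mulVec (f δ) := by
    rw [Matrix.mulVec_smul]
  rw [hmv]
  simp only [Pi.sub_apply, Pi.smul_apply, smul_eq_mul]
  linear_combination ((2 : ZMod ℓ)⁻¹) * ki - (f g i) * h21
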